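/- Let θ ∈ [2π/3, π], let u, v ∈ ℝ² be unit vectors with ⟪u,v⟫ = cos θ, and let M'(u,v) = {p ∈ ℝ² : ‖p‖ ≤ 1, ⟪p,u⟫ ≤ 1/2, ⟪p,v⟫ ≤ 1/2}. Then volume(M'(u,v)) = π/3 + √3/2; in particular this area is independent of θ and equals the area of M. -/

import Mathlib

open Metric MeasureTheory Real
open scoped ENNReal RealInnerProductSpace

noncomputable section

/-- The Euclidean plane. -/
abbrev Pt := EuclideanSpace ℝ (Fin 2)

/-- The set `M'(u,v)`: the closed unit disk truncated by two non-crossing chords of length `√3`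
whose bounding half-planes have inward normals `u` and `v`. -/
def M' (u v : Pt) : Set Pt := {p | ‖p‖ ≤ 1 ∧ ⟪p, u⟫ ≤ 1 / 2 ∧ ⟪p, v⟫ ≤ 1 / 2}

/-!
Each chord cuts off from the unit disk a cap of area `arccos (1/2) - (1/2) · √3/2 = π/3 - √3/4`:
a reflection moves the normal to the first basis vector, and there the cap is the region between
`± √(1 - x²)` over `(1/2, 1)`. Since `⟪u, v⟫ ≤ -1/2` gives `‖u + v‖ ≤ 1`, no point of the disk lies
beyond both chords, so the two caps are disjoint and `M'(u,v)` has area `π - 2 (π/3 - √3/4)`.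
-/

open Set

section Cap

variable {E : Type*} [NormedAddCommGroup E] [InnerProductSpace ℝ E]

-- Open in the norm so that it is exactly a `regionBetween`; the circle `‖p‖ = 1` is null.
def unitCap (u : E) (h : ℝ) : Set E := ball 0 1 ∩ {p | h < ⟪p, u⟫}

lemma isOpen_unitCap (u : E) (h : ℝ) : IsOpen (unitCap u h) :=
  isOpen_ball.inter (isOpen_lt continuous_const (continuous_id.inner continuous_const))

lemma preimage_unitCap (f : E ≃ₗᵢ[ℝ] E) (u : E) (h : ℝ) :
    f ⁻¹' unitCap u h = unitCap (f.symm u) h := by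
  ext p
  simp [unitCap, LinearIsometryEquiv.inner_map_eq_flip]

lemma disjoint_unitCap_of_norm_add_le {u v : E} {h : ℝ} (huv : ‖u + v‖ ≤ 2 * h) :
    Disjoint (unitCap u h) (unitCap v h) := by
  refine Set.disjoint_left.2 fun p ⟨hp, hpu⟩ ⟨_, hpv⟩ => ?_
  rw [mem_ball_zero_iff] at hp
  have : ⟪p, u + v⟫ ≤ ‖u + v‖ := by
    calc ⟪p, u + v⟫ ≤ ‖p‖ * ‖u + v‖ := real_inner_le_norm p (u + v)
      _ ≤ ‖u + v‖ := mul_le_of_le_one_left (norm_nonneg _) hp.le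
  rw [inner_add_right] at this
  simp only [mem_ofPred_eq] at hpu hpv
  linarith

variable [FiniteDimensional ℝ E] [MeasurableSpace E] [BorelSpace E]

lemma volume_unitCap_eq_of_norm_eq {u w : E} (huw : ‖u‖ = ‖w‖) (h : ℝ) :
    volume (unitCap u h) = volume (unitCap w h) := by
  set f := Submodule.reflection (ℝ ∙ (u - w))ᗮ
  have hfu : f.symm u = w := by rw [Submodule.reflection_symm]; exact Submodule.reflection_sub huw
  rw [← hfu, ← preimage_unitCap,
    f.measurePreserving.measure_preimage (isOpen_unitCap u h).measurableSet.nullMeasurableSet]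

end Cap

lemma hasDerivAt_mul_sqrt_one_sub_sq_sub_arccos {x : ℝ} (hx : x ∈ Ioo (-1 : ℝ) 1) :
    HasDerivAt (fun x => x * √(1 - x ^ 2) - arccos x) (2 * √(1 - x ^ 2)) x := by
  have hpos : 0 < 1 - x ^ 2 := by nlinarith [hx.1, hx.2]
  have hsqrt : HasDerivAt (fun x => √(1 - x ^ 2)) (-(2 * x) / (2 * √(1 - x ^ 2))) x := by
    simpa using ((hasDerivAt_pow 2 x).const_sub 1).sqrt hpos.ne'
  refine (((hasDerivAt_id' x).mul hsqrt).sub (hasDerivAt_arccos hx.1.ne' hx.2.ne)).congr_deriv ?_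
  field_simp
  rw [Real.sq_sqrt hpos.le]
  ring

lemma integral_two_mul_sqrt_one_sub_sq {h : ℝ} (hh : h ∈ Icc (-1 : ℝ) 1) :
    ∫ x in h..1, 2 * √(1 - x ^ 2) = arccos h - h * √(1 - h ^ 2) := by
  rw [intervalIntegral.integral_eq_sub_of_hasDerivAt_of_le hh.2 (by fun_prop)
    (fun x hx => hasDerivAt_mul_sqrt_one_sub_sq_sub_arccos ⟨hh.1.trans_lt hx.1, hx.2⟩)
    ((by fun_prop : Continuous fun x : ℝ => 2 * √(1 - x ^ 2)).intervalIntegrable _ _)]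
  simp

lemma measurePreserving_coords :
    MeasurePreserving (fun p : Pt => (p 0, p 1)) volume volume :=
  (volume_preserving_finTwoArrow ℝ).comp
    (EuclideanSpace.volume_preserving_symm_measurableEquiv_toLp (Fin 2))

lemma unitCap_single_zero_eq_preimage (h : ℝ) :
    unitCap (EuclideanSpace.single 0 1 : Pt) h = (fun p : Pt => (p 0, p 1)) ⁻¹'
      regionBetween (fun x => -√(1 - x ^ 2)) (fun x => √(1 - x ^ 2)) (Ioo h 1) := by
  ext p
  simp only [unitCap, mem_inter_iff, mem_ball_zero_iff, EuclideanSpace.norm_eq, Fin.sum_univ_two,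
    Real.norm_eq_abs, sq_abs, mem_ofPred_eq, EuclideanSpace.inner_single_right, mem_preimage,
    regionBetween, mem_Ioo, Real.sqrt_lt' one_pos, one_pow, one_mul, conj_trivial, ← Real.sq_lt]
  constructor
  · rintro ⟨hp, hh⟩
    exact ⟨⟨hh, by nlinarith⟩, by linarith⟩
  · rintro ⟨⟨hh, -⟩, hp⟩
    exact ⟨by linarith, hh⟩

lemma volume_unitCap_single_zero {h : ℝ} (hh : h ∈ Icc (-1 : ℝ) 1) :
    volume (unitCap (EuclideanSpace.single 0 1 : Pt) h)
      = ENNReal.ofReal (arccos h - h * √(1 - h ^ 2)) := by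
  have hcont : Continuous fun x : ℝ => √(1 - x ^ 2) := by fun_prop
  have hcont' : Continuous fun x : ℝ => -√(1 - x ^ 2) := by fun_prop
  rw [unitCap_single_zero_eq_preimage, measurePreserving_coords.measure_preimage
      (measurableSet_regionBetween hcont'.measurable hcont.measurable
        measurableSet_Ioo).nullMeasurableSet,
    Measure.volume_eq_prod,
    volume_regionBetween_eq_integral (hcont'.integrableOn_Icc.mono_set Ioo_subset_Icc_self)
      (hcont.integrableOn_Icc.mono_set Ioo_subset_Icc_self) measurableSet_Ioo
      fun x _ => neg_le_self (Real.sqrt_nonneg _),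
    ← integral_two_mul_sqrt_one_sub_sq hh, intervalIntegral.integral_of_le hh.2,
    integral_Ioc_eq_integral_Ioo]
  congr 2 with x
  simp only [Pi.sub_apply]
  ring

lemma volume_unitCap_half {u : Pt} (hu : ‖u‖ = 1) :
    volume (unitCap u (1 / 2)) = ENNReal.ofReal (π / 3 - √3 / 4) := by
  have harccos : arccos (1 / 2) = π / 3 := by
    rw [← cos_pi_div_three, arccos_cos (by positivity) (by linarith [pi_pos])]
  have hsqrt : √(1 - (1 / 2 : ℝ) ^ 2) = √3 / 2 := by
    rw [← sin_arccos, harccos, sin_pi_div_three]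
  rw [volume_unitCap_eq_of_norm_eq (w := EuclideanSpace.single 0 1) (by simp [hu]),
    volume_unitCap_single_zero (by norm_num), harccos, hsqrt]
  ring_nf

lemma ball_eq_union_unitCap (u v : Pt) :
    ball 0 1 = (M' u v \ sphere 0 1) ∪ unitCap u (1 / 2) ∪ unitCap v (1 / 2) := by
  ext p
  simp only [M', unitCap, mem_union, mem_sdiff, mem_inter_iff, mem_ball_zero_iff,
    mem_sphere_zero_iff_norm, mem_ofPred_eq]
  constructor
  · intro hp
    by_cases hpu : 1 / 2 < ⟪p, u⟫
    · exact .inl (.inr ⟨hp, hpu⟩)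
    by_cases hpv : 1 / 2 < ⟪p, v⟫
    · exact .inr ⟨hp, hpv⟩
    exact .inl (.inl ⟨⟨hp.le, not_lt.1 hpu, not_lt.1 hpv⟩, hp.ne⟩)
  · rintro ((⟨⟨hp, -⟩, hp'⟩ | ⟨hp, -⟩) | ⟨hp, -⟩)
    exacts [lt_of_le_of_ne hp hp', hp, hp]

lemma volume_M'_add_volume_unitCap_add_volume_unitCap {u v : Pt}
    (huv : Disjoint (unitCap u (1 / 2)) (unitCap v (1 / 2))) :
    volume (M' u v) + volume (unitCap u (1 / 2)) + volume (unitCap v (1 / 2))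
      = volume (ball (0 : Pt) 1) := by
  have hu : Disjoint (M' u v \ sphere 0 1) (unitCap u (1 / 2)) :=
    Set.disjoint_left.2 fun p hp hpu => (not_lt.2 hp.1.2.1) hpu.2
  have hv : Disjoint (M' u v \ sphere 0 1) (unitCap v (1 / 2)) :=
    Set.disjoint_left.2 fun p hp hpv => (not_lt.2 hp.1.2.2) hpv.2
  rw [ball_eq_union_unitCap u v, measure_union (disjoint_union_left.2 ⟨hv, huv⟩)
      (isOpen_unitCap v _).measurableSet,
    measure_union hu (isOpen_unitCap u _).measurableSet,
    measure_sdiff_null (Measure.addHaar_sphere volume 0 1)]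

/-- The area of `M'(u,v)` is `π/3 + √3/2`, independently of the angle `θ ∈ [2π/3, π]` between
the normals `u` and `v`. -/
theorem volume_M' (θ : ℝ) (hθ : θ ∈ Set.Icc (2 * π / 3) π) (u v : Pt)
    (hu : ‖u‖ = 1) (hv : ‖v‖ = 1) (huv : ⟪u, v⟫ = Real.cos θ) :
    volume (M' u v) = ENNReal.ofReal (π / 3 + Real.sqrt 3 / 2) := by
  have hcos : cos θ ≤ -(1 / 2) := by
    have := cos_le_cos_of_nonneg_of_le_pi (by positivity) hθ.2 hθ.1
    rwa [show 2 * π / 3 = π - π / 3 by ring, cos_pi_sub, cos_pi_div_three] at this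
  have hnorm : ‖u + v‖ ≤ 2 * (1 / 2) := by
    have : ‖u + v‖ ^ 2 ≤ 1 := by rw [norm_add_sq_real, hu, hv, huv]; linarith
    nlinarith [norm_nonneg (u + v)]
  have hsum := volume_M'_add_volume_unitCap_add_volume_unitCap
    (disjoint_unitCap_of_norm_add_le hnorm)
  have hcap : 0 ≤ π / 3 - √3 / 4 := by
    have : √3 < 2 := (Real.sqrt_lt' two_pos).2 (by norm_num)
    linarith [pi_gt_three]
  have hπ : ENNReal.ofReal π = ENNReal.ofReal (π / 3 + √3 / 2)
      + ENNReal.ofReal (π / 3 - √3 / 4) + ENNReal.ofReal (π / 3 - √3 / 4) := by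
    rw [← ENNReal.ofReal_add (by positivity) hcap, ← ENNReal.ofReal_add (by positivity) hcap]
    ring_nf
  rw [volume_unitCap_half hu, volume_unitCap_half hv, EuclideanSpace.volume_ball_fin_two,
    ENNReal.ofReal_one, one_pow, one_mul, hπ, ENNReal.add_left_inj ENNReal.ofReal_ne_top,
    ENNReal.add_left_inj ENNReal.ofReal_ne_top] at hsum
  exact hsum
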